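/- arXiv:2405.01357 — 2 statements merged into one kernel-verified Lean document; each statement's English description precedes it below -/
import Mathlib

section
/- (Goluzin–Yamashita second-order Schwarz–Pick inequality.) Let f : ℂ → ℂ be holomorphic on the open unit disk 𝔻 with f(𝔻) ⊆ 𝔻, and let ω ∈ 𝔻. Set α = 1 − |ω|² and β = −conj(ω)·(1 − |ω|²). Then |((1/2)·α²·f''(ω) + β·f'(ω))·(1 − |f(ω)|²) + α²·f'(ω)²·conj(f(ω))| ≤ (1 − |f(ω)|²)² − |α·f'(ω)|², where f' and f'' denote the first and second complex derivatives of f. -/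
/-!
Let `φ_a z = (z + a) / (1 + conj a * z)`, an automorphism of the unit disk. The map
`g = φ_{-f ω} ∘ f ∘ φ_ω` is a self-map of the disk fixing `0`, and by the second-order chain
rule the inequality is `β² / 2 * ‖g''(0)‖ ≤ β² * (1 - ‖g'(0)‖²)` with `β = 1 - ‖f ω‖²`.
This second-order Schwarz lemma is the Schwarz–Pick bound `‖h'(0)‖ ≤ 1 - ‖h(0)‖²` applied to
`h = g(z) / z`, for which `h(0) = g'(0)` and `h'(0) = g''(0) / 2`.
-/

open Complex ComplexConjugate Metric Set Filter Topology

section Analytic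

variable {𝕜 : Type*} [NontriviallyNormedField 𝕜] [CompleteSpace 𝕜] {h k : 𝕜 → 𝕜} {x : 𝕜}

theorem AnalyticAt.deriv_deriv_comp (hh : AnalyticAt 𝕜 h (k x)) (hk : AnalyticAt 𝕜 k x) :
    deriv (deriv (h ∘ k)) x =
      deriv (deriv h) (k x) * deriv k x ^ 2 + deriv h (k x) * deriv (deriv k) x := by
  have hderiv : deriv (h ∘ k) =ᶠ[𝓝 x] fun y => deriv h (k y) * deriv k y := by
    filter_upwards [hk.eventually_analyticAt,
      hk.continuousAt.eventually hh.eventually_analyticAt] with y hky hhy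
    exact deriv_comp y hhy.differentiableAt hky.differentiableAt
  have hprod := (hh.deriv.differentiableAt.hasDerivAt.comp x hk.differentiableAt.hasDerivAt).fun_mul
    hk.deriv.differentiableAt.hasDerivAt
  rw [hderiv.deriv_eq]
  exact hprod.deriv.trans (by simp only [Function.comp_apply]; ring)

theorem AnalyticAt.deriv_deriv_eq_two_mul_deriv_dslope {g : 𝕜 → 𝕜} (hg : AnalyticAt 𝕜 g x) :
    deriv (deriv g) x = 2 * deriv (dslope g x) x := by
  set h := dslope g x
  have hh : AnalyticAt 𝕜 h x := by
    obtain ⟨p, hp⟩ := hg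
    exact hp.has_fpower_series_dslope_fslope.analyticAt
  have hderiv : deriv g =ᶠ[𝓝 x] fun y => h y + (y - x) * deriv h y := by
    filter_upwards [hh.eventually_analyticAt] with y hy
    have hgy : HasDerivAt (fun y => g x + (y - x) * h y) (1 * h y + (y - x) * deriv h y) y :=
      (((hasDerivAt_id y).sub_const x).mul hy.differentiableAt.hasDerivAt).const_add (g x)
    have hg_eq : (fun y => g x + (y - x) * h y) = g := by
      funext y
      rw [← smul_eq_mul, sub_smul_dslope, add_sub_cancel]
    rw [hg_eq] at hgy
    rw [hgy.deriv, one_mul]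
  have hsum : HasDerivAt (fun y => h y + (y - x) * deriv h y)
      (deriv h x + (1 * deriv h x + (x - x) * deriv (deriv h) x)) x :=
    hh.differentiableAt.hasDerivAt.add
      (((hasDerivAt_id x).sub_const x).mul hh.deriv.differentiableAt.hasDerivAt)
  rw [hderiv.deriv_eq, hsum.deriv]
  ring

end Analytic

noncomputable def diskMobius (a z : ℂ) : ℂ := (z + a) / (1 + conj a * z)

section DiskMobius

variable {a z : ℂ}

theorem sq_norm_one_add_conj_mul_sub_sq_norm_add (a z : ℂ) :
    ‖1 + conj a * z‖ ^ 2 - ‖z + a‖ ^ 2 = (1 - ‖a‖ ^ 2) * (1 - ‖z‖ ^ 2) := by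
  apply ofReal_injective
  push_cast
  simp only [← mul_conj', map_add, map_mul, map_one, conj_conj]
  ring

theorem one_add_conj_mul_ne_zero (ha : ‖a‖ < 1) (hz : ‖z‖ ≤ 1) : 1 + conj a * z ≠ 0 := by
  intro h
  have : ‖conj a * z‖ < 1 := by
    rw [norm_mul, norm_conj]
    nlinarith [norm_nonneg a, norm_nonneg z]
  rw [eq_neg_of_add_eq_zero_right h, norm_neg, norm_one] at this
  exact this.false

theorem mapsTo_diskMobius_closedBall (ha : ‖a‖ < 1) :
    MapsTo (diskMobius a) (closedBall 0 1) (closedBall 0 1) := by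
  intro z hz
  rw [mem_closedBall_zero_iff] at hz ⊢
  rw [diskMobius, norm_div, div_le_one (norm_pos_iff.2 (one_add_conj_mul_ne_zero ha hz))]
  rw [← pow_le_pow_iff_left₀ (norm_nonneg _) (norm_nonneg _) two_ne_zero]
  have hpos : 0 ≤ (1 - ‖a‖ ^ 2) * (1 - ‖z‖ ^ 2) :=
    mul_nonneg (by nlinarith [norm_nonneg a]) (by nlinarith [norm_nonneg z])
  linarith [sq_norm_one_add_conj_mul_sub_sq_norm_add a z]

theorem mapsTo_diskMobius_ball (ha : ‖a‖ < 1) :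
    MapsTo (diskMobius a) (ball 0 1) (ball 0 1) := by
  intro z hz
  rw [mem_ball_zero_iff] at hz ⊢
  rw [diskMobius, norm_div, div_lt_one (norm_pos_iff.2 (one_add_conj_mul_ne_zero ha hz.le))]
  rw [← pow_lt_pow_iff_left₀ (norm_nonneg _) (norm_nonneg _) two_ne_zero]
  have hpos : 0 < (1 - ‖a‖ ^ 2) * (1 - ‖z‖ ^ 2) :=
    mul_pos (by nlinarith [norm_nonneg a]) (by nlinarith [norm_nonneg z])
  linarith [sq_norm_one_add_conj_mul_sub_sq_norm_add a z]

theorem analyticAt_diskMobius (hz : 1 + conj a * z ≠ 0) : AnalyticAt ℂ (diskMobius a) z := by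
  unfold diskMobius
  fun_prop (disch := assumption)

theorem differentiableOn_diskMobius (ha : ‖a‖ < 1) :
    DifferentiableOn ℂ (diskMobius a) (closedBall 0 1) := fun _ hz =>
  (analyticAt_diskMobius (one_add_conj_mul_ne_zero ha
    (mem_closedBall_zero_iff.1 hz))).differentiableAt.differentiableWithinAt

theorem hasDerivAt_diskMobius (hz : 1 + conj a * z ≠ 0) :
    HasDerivAt (diskMobius a) ((1 - (‖a‖ : ℂ) ^ 2) / (1 + conj a * z) ^ 2) z := by
  have hnum : HasDerivAt (fun w => w + a) 1 z := (hasDerivAt_id z).add_const a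
  have hden : HasDerivAt (fun w => 1 + conj a * w) (conj a) z := by
    simpa using ((hasDerivAt_id z).const_mul (conj a)).const_add 1
  refine (hnum.fun_div hden hz).congr_deriv ?_
  rw [← conj_mul']
  ring

theorem deriv_deriv_diskMobius (hz : 1 + conj a * z ≠ 0) :
    deriv (deriv (diskMobius a)) z =
      -2 * conj a * (1 - (‖a‖ : ℂ) ^ 2) / (1 + conj a * z) ^ 3 := by
  have hden : HasDerivAt (fun w => 1 + conj a * w) (conj a) z := by
    simpa using ((hasDerivAt_id z).const_mul (conj a)).const_add 1
  have hderiv : deriv (diskMobius a) =ᶠ[𝓝 z]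
      fun w => (1 - (‖a‖ : ℂ) ^ 2) / (1 + conj a * w) ^ 2 := by
    filter_upwards [hden.continuousAt.eventually_ne hz] with w hw
    exact (hasDerivAt_diskMobius hw).deriv
  rw [hderiv.deriv_eq, ((hasDerivAt_const z _).fun_div (hden.fun_pow 2) (pow_ne_zero 2 hz)).deriv]
  field_simp
  ring

end DiskMobius

section Composition

variable {a b : ℂ}

@[simp]
theorem diskMobius_apply_zero (a : ℂ) : diskMobius a 0 = a := by
  simp [diskMobius]

@[simp]
theorem diskMobius_neg_apply_self (b : ℂ) : diskMobius (-b) b = 0 := by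
  simp [diskMobius]

theorem one_add_conj_neg_mul_self (b : ℂ) : 1 + conj (-b) * b = 1 - (‖b‖ : ℂ) ^ 2 := by
  rw [map_neg, neg_mul, conj_mul', sub_eq_add_neg]

theorem one_sub_sq_norm_ne_zero (hb : ‖b‖ < 1) : (1 : ℂ) - (‖b‖ : ℂ) ^ 2 ≠ 0 := by
  rw [← one_add_conj_neg_mul_self]
  exact one_add_conj_mul_ne_zero (by rwa [norm_neg]) hb.le

theorem norm_one_sub_sq_norm (hb : ‖b‖ ≤ 1) : ‖(1 : ℂ) - (‖b‖ : ℂ) ^ 2‖ = 1 - ‖b‖ ^ 2 := by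
  rw [← ofReal_one, ← ofReal_pow, ← ofReal_sub, norm_real, Real.norm_of_nonneg]
  nlinarith [norm_nonneg b]

variable {f F : ℂ → ℂ} {x : ℂ}

theorem deriv_comp_diskMobius_zero (hf : DifferentiableAt ℂ f a) :
    deriv (f ∘ diskMobius a) 0 = deriv f a * (1 - (‖a‖ : ℂ) ^ 2) := by
  have hM := hasDerivAt_diskMobius (a := a) (z := 0) (by simp)
  rw [← diskMobius_apply_zero a] at hf
  rw [(hf.hasDerivAt.comp 0 hM).deriv]
  simp

theorem deriv_deriv_comp_diskMobius_zero (hf : AnalyticAt ℂ f a) :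
    deriv (deriv (f ∘ diskMobius a)) 0 =
      deriv (deriv f) a * (1 - (‖a‖ : ℂ) ^ 2) ^ 2 -
        2 * conj a * (1 - (‖a‖ : ℂ) ^ 2) * deriv f a := by
  have hden : 1 + conj a * 0 ≠ 0 := by simp
  rw [← diskMobius_apply_zero a] at hf
  rw [hf.deriv_deriv_comp (analyticAt_diskMobius hden), (hasDerivAt_diskMobius hden).deriv,
    deriv_deriv_diskMobius hden]
  simp only [diskMobius_apply_zero]
  ring

theorem deriv_diskMobius_neg_comp (hF : DifferentiableAt ℂ F x) (hx : ‖F x‖ < 1) :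
    deriv (diskMobius (-F x) ∘ F) x = deriv F x / (1 - (‖F x‖ : ℂ) ^ 2) := by
  have hden : 1 + conj (-F x) * F x ≠ 0 := by
    rw [one_add_conj_neg_mul_self]; exact one_sub_sq_norm_ne_zero hx
  rw [((hasDerivAt_diskMobius hden).comp x hF.hasDerivAt).deriv, one_add_conj_neg_mul_self,
    norm_neg]
  field_simp [one_sub_sq_norm_ne_zero hx]

theorem deriv_deriv_diskMobius_neg_comp (hF : AnalyticAt ℂ F x) (hx : ‖F x‖ < 1) :
    deriv (deriv (diskMobius (-F x) ∘ F)) x =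
      2 * conj (F x) * deriv F x ^ 2 / (1 - (‖F x‖ : ℂ) ^ 2) ^ 2 +
        deriv (deriv F) x / (1 - (‖F x‖ : ℂ) ^ 2) := by
  have hden : 1 + conj (-F x) * F x ≠ 0 := by
    rw [one_add_conj_neg_mul_self]; exact one_sub_sq_norm_ne_zero hx
  rw [(analyticAt_diskMobius hden).deriv_deriv_comp hF, (hasDerivAt_diskMobius hden).deriv,
    deriv_deriv_diskMobius hden, one_add_conj_neg_mul_self, norm_neg, map_neg]
  field_simp [one_sub_sq_norm_ne_zero hx]

end Composition

theorem norm_deriv_le_one_sub_sq_norm_of_mapsTo_closedBall {h : ℂ → ℂ}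
    (hd : DifferentiableOn ℂ h (ball 0 1)) (hm : MapsTo h (ball 0 1) (closedBall 0 1)) :
    ‖deriv h 0‖ ≤ 1 - ‖h 0‖ ^ 2 := by
  have hdiff : ∀ z ∈ ball (0 : ℂ) 1, DifferentiableAt ℂ h z := fun z hz =>
    hd.differentiableAt (isOpen_ball.mem_nhds hz)
  have hb : ‖h 0‖ ≤ 1 := mem_closedBall_zero_iff.1 (hm (mem_ball_self one_pos))
  rcases hb.lt_or_eq with hlt | heq
  · have hnorm : ‖-h 0‖ < 1 := by rwa [norm_neg]
    have hk_maps : MapsTo (diskMobius (-h 0) ∘ h) (ball 0 1)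
        (closedBall ((diskMobius (-h 0) ∘ h) 0) 1) := by
      rw [Function.comp_apply, diskMobius_neg_apply_self]
      exact (mapsTo_diskMobius_closedBall hnorm).comp hm
    have hk_diff : DifferentiableOn ℂ (diskMobius (-h 0) ∘ h) (ball 0 1) :=
      (differentiableOn_diskMobius hnorm).comp hd hm
    have hschwarz := norm_deriv_le_one_of_mapsTo_ball hk_diff hk_maps one_pos
    rwa [deriv_diskMobius_neg_comp (hdiff 0 (mem_ball_self one_pos)) hlt, norm_div,
      norm_one_sub_sq_norm hb, div_le_one (by nlinarith [norm_nonneg (h 0)])] at hschwarz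
  · have hmax : IsLocalMax (norm ∘ h) 0 :=
      Filter.eventually_of_mem (ball_mem_nhds 0 one_pos) fun z hz => by
        simpa [heq] using mem_closedBall_zero_iff.1 (hm hz)
    have hconst : h =ᶠ[𝓝 0] fun _ => h 0 := Complex.eventually_eq_of_isLocalMax_norm
      (Filter.eventually_of_mem (ball_mem_nhds 0 one_pos) hdiff) hmax
    rw [hconst.deriv_eq, deriv_const, heq]
    norm_num

theorem norm_deriv_deriv_le_of_mapsTo_closedBall {g : ℂ → ℂ}
    (hd : DifferentiableOn ℂ g (ball 0 1)) (hm : MapsTo g (ball 0 1) (closedBall 0 1))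
    (h₀ : g 0 = 0) :
    ‖deriv (deriv g) 0‖ ≤ 2 * (1 - ‖deriv g 0‖ ^ 2) := by
  have hdslope_maps : MapsTo (dslope g 0) (ball 0 1) (closedBall 0 1) := fun z hz => by
    rw [mem_closedBall_zero_iff]
    simpa using norm_dslope_le_div_of_mapsTo_ball hd (by rwa [h₀]) hz
  have hpick := norm_deriv_le_one_sub_sq_norm_of_mapsTo_closedBall
    ((differentiableOn_dslope (ball_mem_nhds 0 one_pos)).2 hd) hdslope_maps
  rw [dslope_same] at hpick
  rw [(hd.analyticAt (ball_mem_nhds 0 one_pos)).deriv_deriv_eq_two_mul_deriv_dslope, norm_mul,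
    Complex.norm_two]
  linarith

noncomputable def diskNormalize (f : ℂ → ℂ) (a : ℂ) : ℂ → ℂ :=
  diskMobius (-f a) ∘ f ∘ diskMobius a

section DiskNormalize

variable {f : ℂ → ℂ} {a : ℂ}

theorem diskNormalize_apply_zero : diskNormalize f a 0 = 0 := by
  simp [diskNormalize]

theorem mapsTo_diskNormalize (hmap : MapsTo f (ball 0 1) (ball 0 1)) (ha : ‖a‖ < 1) :
    MapsTo (diskNormalize f a) (ball 0 1) (ball 0 1) :=
  (mapsTo_diskMobius_ball (by simpa using hmap (mem_ball_zero_iff.2 ha))).comp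
    (hmap.comp (mapsTo_diskMobius_ball ha))

theorem differentiableOn_diskNormalize (hf : DifferentiableOn ℂ f (ball 0 1))
    (hmap : MapsTo f (ball 0 1) (ball 0 1)) (ha : ‖a‖ < 1) :
    DifferentiableOn ℂ (diskNormalize f a) (ball 0 1) :=
  ((differentiableOn_diskMobius (by simpa using hmap (mem_ball_zero_iff.2 ha))).mono
    ball_subset_closedBall).comp
    (hf.comp ((differentiableOn_diskMobius ha).mono ball_subset_closedBall)
      (mapsTo_diskMobius_ball ha))
    (hmap.comp (mapsTo_diskMobius_ball ha))

theorem deriv_diskNormalize_zero (hf : DifferentiableAt ℂ f a) (hfa : ‖f a‖ < 1) :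
    deriv (diskNormalize f a) 0 =
      (1 - (‖a‖ : ℂ) ^ 2) * deriv f a / (1 - (‖f a‖ : ℂ) ^ 2) := by
  have hF : DifferentiableAt ℂ (f ∘ diskMobius a) 0 :=
    (diskMobius_apply_zero a ▸ hf).comp 0 (analyticAt_diskMobius (by simp)).differentiableAt
  have hF0 : (f ∘ diskMobius a) 0 = f a := by simp
  have hpost := deriv_diskMobius_neg_comp hF (hF0 ▸ hfa)
  rw [hF0] at hpost
  rw [diskNormalize, hpost, deriv_comp_diskMobius_zero hf, mul_comm]

theorem deriv_deriv_diskNormalize_zero (hf : AnalyticAt ℂ f a) (hfa : ‖f a‖ < 1) :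
    deriv (deriv (diskNormalize f a)) 0 =
      2 * conj (f a) * ((1 - (‖a‖ : ℂ) ^ 2) * deriv f a) ^ 2 / (1 - (‖f a‖ : ℂ) ^ 2) ^ 2 +
        ((1 - (‖a‖ : ℂ) ^ 2) ^ 2 * deriv (deriv f) a -
          2 * conj a * (1 - (‖a‖ : ℂ) ^ 2) * deriv f a) / (1 - (‖f a‖ : ℂ) ^ 2) := by
  have hF : AnalyticAt ℂ (f ∘ diskMobius a) 0 :=
    (diskMobius_apply_zero a ▸ hf).comp (analyticAt_diskMobius (by simp))
  have hF0 : (f ∘ diskMobius a) 0 = f a := by simp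
  have hpost := deriv_deriv_diskMobius_neg_comp hF (hF0 ▸ hfa)
  rw [hF0] at hpost
  rw [diskNormalize, hpost, deriv_deriv_comp_diskMobius_zero hf,
    deriv_comp_diskMobius_zero hf.differentiableAt]
  ring

end DiskNormalize

/-- **The Goluzin–Yamashita second-order Schwarz–Pick inequality.** -/
theorem goluzin_yamashita (f : ℂ → ℂ)
    (hf : DifferentiableOn ℂ f {z : ℂ | ‖z‖ < 1})
    (hmap : ∀ z : ℂ, ‖z‖ < 1 → ‖f z‖ < 1)
    (ω : ℂ) (hω : ‖ω‖ < 1) :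
    ‖(((1 / 2) * ((1 : ℂ) - (‖ω‖ : ℂ) ^ 2) ^ 2 * deriv (deriv f) ω +
            (-(starRingEnd ℂ) ω * ((1 : ℂ) - (‖ω‖ : ℂ) ^ 2)) * deriv f ω) *
            ((1 : ℂ) - (‖f ω‖ : ℂ) ^ 2) +
          ((1 : ℂ) - (‖ω‖ : ℂ) ^ 2) ^ 2 * (deriv f ω) ^ 2 * (starRingEnd ℂ) (f ω))‖ ≤
      (1 - ‖f ω‖ ^ 2) ^ 2 -
        ‖((1 : ℂ) - (‖ω‖ : ℂ) ^ 2) * deriv f ω‖ ^ 2 := by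
  have hball : {z : ℂ | ‖z‖ < 1} = ball 0 1 := by ext; simp
  rw [hball] at hf
  have hf_maps : MapsTo f (ball 0 1) (ball 0 1) := fun z hz => by
    simpa using hmap z (mem_ball_zero_iff.1 hz)
  have hf_an : AnalyticAt ℂ f ω := hf.analyticAt (isOpen_ball.mem_nhds (mem_ball_zero_iff.2 hω))
  have hschwarz := norm_deriv_deriv_le_of_mapsTo_closedBall
    (differentiableOn_diskNormalize hf hf_maps hω)
    ((mapsTo_diskNormalize hf_maps hω).mono_right ball_subset_closedBall) diskNormalize_apply_zero
  rw [deriv_diskNormalize_zero hf_an.differentiableAt (hmap ω hω),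
    deriv_deriv_diskNormalize_zero hf_an (hmap ω hω)] at hschwarz
  set α : ℂ := 1 - (‖ω‖ : ℂ) ^ 2
  set β : ℂ := 1 - (‖f ω‖ : ℂ) ^ 2
  have hβ : β ≠ 0 := one_sub_sq_norm_ne_zero (hmap ω hω)
  have hβ_norm : ‖β‖ = 1 - ‖f ω‖ ^ 2 := norm_one_sub_sq_norm (hmap ω hω).le
  have hβ_pos : 0 < 1 - ‖f ω‖ ^ 2 := by nlinarith [hmap ω hω, norm_nonneg (f ω)]
  calc ‖_‖ = ‖β ^ 2 / 2 * (2 * conj (f ω) * (α * deriv f ω) ^ 2 / β ^ 2 +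
        (α ^ 2 * deriv (deriv f) ω - 2 * conj ω * α * deriv f ω) / β)‖ := by
        congr 1
        field_simp
        ring
    _ ≤ (1 - ‖f ω‖ ^ 2) ^ 2 / 2 * (2 * (1 - ‖α * deriv f ω / β‖ ^ 2)) := by
        rw [norm_mul, norm_div, norm_pow, hβ_norm, Complex.norm_two]
        gcongr
    _ = (1 - ‖f ω‖ ^ 2) ^ 2 - ‖α * deriv f ω‖ ^ 2 := by
        rw [norm_div, hβ_norm]
        field_simp
end

section
/- (Schwarz–Pick inequality for the polydisk.) Let n ≥ 1 and let f : ℂⁿ → ℂ be holomorphic on the open unit polydisk 𝔻ⁿ with f(𝔻ⁿ) ⊆ 𝔻 (i.e. |f(z)| < 1 for z ∈ 𝔻ⁿ). Then for all a = (a₁,…,aₙ) and b = (b₁,…,bₙ) in 𝔻ⁿ, |(f(a) − f(b))/(1 − conj(f(a))·f(b))| ≤ max over 1 ≤ i ≤ n of |(aᵢ − bᵢ)/(1 − conj(aᵢ)·bᵢ)|. -/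
/-!
Let `φ_w(z) = (w - z) / (1 - conj w * z)`, the involutive automorphism of the unit disk exchanging
`w` and `0`. The polydisk is the unit ball of `ℂⁿ` with the sup norm, and `Φ_a = (φ_{a₁}, …, φ_{aₙ})`
is a holomorphic involution of it with `Φ_a 0 = a`. The function `z ↦ φ_{f a} (f (Φ_a z))` maps this
ball into the disk and vanishes at `0`, so by the Schwarz lemma on the unit ball of a normed space
its modulus at `z = Φ_a b` is at most `‖Φ_a b‖ = maxᵢ |φ_{aᵢ} bᵢ|`.
-/

open Complex ComplexConjugate Metric Set

noncomputable def mobius (w z : ℂ) : ℂ := (w - z) / (1 - conj w * z)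

lemma sq_norm_one_sub_conj_mul (w z : ℂ) :
    ‖1 - conj w * z‖ ^ 2 = ‖w - z‖ ^ 2 + (1 - ‖w‖ ^ 2) * (1 - ‖z‖ ^ 2) := by
  simp only [Complex.sq_norm, normSq_apply, sub_re, sub_im, mul_re, mul_im, conj_re, conj_im,
    one_re, one_im]
  ring

lemma norm_sub_lt_norm_one_sub_conj_mul {w z : ℂ} (hw : ‖w‖ < 1) (hz : ‖z‖ < 1) :
    ‖w - z‖ < ‖1 - conj w * z‖ := by
  have hpos : 0 < (1 - ‖w‖ ^ 2) * (1 - ‖z‖ ^ 2) := by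
    have := norm_nonneg w; have := norm_nonneg z
    apply mul_pos <;> nlinarith
  refine lt_of_pow_lt_pow_left₀ 2 (norm_nonneg _) ?_
  linarith [sq_norm_one_sub_conj_mul w z]

lemma one_sub_conj_mul_ne_zero {w z : ℂ} (hw : ‖w‖ < 1) (hz : ‖z‖ < 1) :
    1 - conj w * z ≠ 0 :=
  norm_pos_iff.mp ((norm_nonneg _).trans_lt (norm_sub_lt_norm_one_sub_conj_mul hw hz))

lemma norm_mobius_lt_one {w z : ℂ} (hw : ‖w‖ < 1) (hz : ‖z‖ < 1) : ‖mobius w z‖ < 1 := by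
  rw [mobius, norm_div, div_lt_one (norm_pos_iff.mpr (one_sub_conj_mul_ne_zero hw hz))]
  exact norm_sub_lt_norm_one_sub_conj_mul hw hz

@[simp] lemma mobius_self (w : ℂ) : mobius w w = 0 := by simp [mobius]

@[simp] lemma mobius_zero_right (w : ℂ) : mobius w 0 = w := by simp [mobius]

lemma mobius_mobius {w z : ℂ} (hw : ‖w‖ < 1) (hz : ‖z‖ < 1) : mobius w (mobius w z) = z := by
  have hwz : 1 - z * conj w ≠ 0 := mul_comm z (conj w) ▸ one_sub_conj_mul_ne_zero hw hz
  have hden := one_sub_conj_mul_ne_zero hw (norm_mobius_lt_one hw hz)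
  rw [mobius, div_eq_iff hden, mobius]
  field_simp
  ring

lemma differentiableOn_mobius {w : ℂ} (hw : ‖w‖ < 1) :
    DifferentiableOn ℂ (mobius w) (ball 0 1) := fun _ hz =>
  ((differentiableAt_id.const_sub w).div (differentiableAt_id.const_mul _ |>.const_sub 1)
    (one_sub_conj_mul_ne_zero hw (mem_ball_zero_iff.mp hz))).differentiableWithinAt

lemma mapsTo_mobius {w : ℂ} (hw : ‖w‖ < 1) : MapsTo (mobius w) (ball 0 1) (ball 0 1) :=
  fun _ hz => mem_ball_zero_iff.mpr (norm_mobius_lt_one hw (mem_ball_zero_iff.mp hz))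

theorem norm_mobius_le_norm_of_mapsTo_ball {E : Type*} [NormedAddCommGroup E] [NormedSpace ℂ E]
    {f : E → ℂ} (hd : DifferentiableOn ℂ f (ball 0 1)) (hmap : MapsTo f (ball 0 1) (ball 0 1))
    {z : E} (hz : ‖z‖ < 1) : ‖mobius (f 0) (f z)‖ ≤ ‖z‖ := by
  have hf₀ : ‖f 0‖ < 1 := mem_ball_zero_iff.mp (hmap (mem_ball_self one_pos))
  refine Complex.norm_le_norm_of_mapsTo_ball (f := mobius (f 0) ∘ f) ?_ ?_ (by simp) hz
  · exact (differentiableOn_mobius hf₀).comp hd hmap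
  · exact ((mapsTo_mobius hf₀).comp hmap).mono_right ball_subset_closedBall

section Polydisk

lemma mem_ball_zero_pi {ι : Type*} [Fintype ι] {z : ι → ℂ} :
    z ∈ ball (0 : ι → ℂ) 1 ↔ ∀ i, ‖z i‖ < 1 := by
  rw [mem_ball_zero_iff, pi_norm_lt_iff one_pos]

variable {ι : Type*}

noncomputable def polydiskMobius (a z : ι → ℂ) : ι → ℂ := fun i => mobius (a i) (z i)

variable {a : ι → ℂ}

lemma polydiskMobius_zero : polydiskMobius a 0 = a := by
  ext i; simp [polydiskMobius]

variable [Fintype ι]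

lemma polydiskMobius_polydiskMobius (ha : a ∈ ball 0 1) {z : ι → ℂ} (hz : z ∈ ball 0 1) :
    polydiskMobius a (polydiskMobius a z) = z := by
  ext i
  exact mobius_mobius (mem_ball_zero_pi.mp ha i) (mem_ball_zero_pi.mp hz i)

lemma mapsTo_polydiskMobius (ha : a ∈ ball 0 1) :
    MapsTo (polydiskMobius a) (ball 0 1) (ball 0 1) := fun _ hz =>
  mem_ball_zero_pi.mpr fun i =>
    norm_mobius_lt_one (mem_ball_zero_pi.mp ha i) (mem_ball_zero_pi.mp hz i)

lemma differentiableOn_polydiskMobius (ha : a ∈ ball 0 1) :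
    DifferentiableOn ℂ (polydiskMobius a) (ball 0 1) :=
  differentiableOn_pi.mpr fun i =>
    (differentiableOn_mobius (mem_ball_zero_pi.mp ha i)).comp
      (differentiable_apply i).differentiableOn fun _ hz =>
        mem_ball_zero_iff.mpr (mem_ball_zero_pi.mp hz i)

theorem norm_mobius_le_norm_polydiskMobius {f : (ι → ℂ) → ℂ}
    (hd : DifferentiableOn ℂ f (ball 0 1)) (hmap : MapsTo f (ball 0 1) (ball 0 1))
    (ha : a ∈ ball 0 1) {b : ι → ℂ} (hb : b ∈ ball 0 1) :
    ‖mobius (f a) (f b)‖ ≤ ‖polydiskMobius a b‖ := by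
  have := norm_mobius_le_norm_of_mapsTo_ball (f := f ∘ polydiskMobius a)
    (hd.comp (differentiableOn_polydiskMobius ha) (mapsTo_polydiskMobius ha))
    (hmap.comp (mapsTo_polydiskMobius ha))
    (mem_ball_zero_iff.mp (mapsTo_polydiskMobius ha hb))
  simpa [polydiskMobius_zero, polydiskMobius_polydiskMobius ha hb] using this

end Polydisk

/-- **The Schwarz–Pick inequality for the polydisk.** -/
theorem schwarz_pick_polydisk (n : ℕ) (hn : 1 ≤ n)
    (f : (Fin n → ℂ) → ℂ)
    (hf : DifferentiableOn ℂ f {z : Fin n → ℂ | ∀ i, ‖z i‖ < 1})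
    (hmap : ∀ z : Fin n → ℂ, (∀ i, ‖z i‖ < 1) → ‖f z‖ < 1)
    (a b : Fin n → ℂ)
    (ha : ∀ i, ‖a i‖ < 1) (hb : ∀ i, ‖b i‖ < 1) :
    ‖(f a - f b) / (1 - (starRingEnd ℂ) (f a) * f b)‖ ≤
      Finset.univ.sup' ⟨⟨0, hn⟩, Finset.mem_univ _⟩
        (fun i => ‖(a i - b i) / (1 - (starRingEnd ℂ) (a i) * b i)‖) := by
  have hball : ball (0 : Fin n → ℂ) 1 = {z | ∀ i, ‖z i‖ < 1} := Set.ext fun _ => mem_ball_zero_pi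
  rw [← hball] at hf
  have hle_sup : ∀ i, ‖mobius (a i) (b i)‖ ≤ _ := fun i =>
    Finset.le_sup' (fun i => ‖mobius (a i) (b i)‖) (Finset.mem_univ i)
  calc ‖mobius (f a) (f b)‖
      ≤ ‖polydiskMobius a b‖ :=
        norm_mobius_le_norm_polydiskMobius hf
          (fun z hz => mem_ball_zero_iff.mpr (hmap z (mem_ball_zero_pi.mp hz)))
          (mem_ball_zero_pi.mpr ha) (mem_ball_zero_pi.mpr hb)
    _ ≤ _ := (pi_norm_le_iff_of_nonneg ((norm_nonneg _).trans (hle_sup ⟨0, hn⟩))).mpr hle_sup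
end
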